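/- arXiv:2410.09361 — 2 statements merged into one kernel-verified Lean document; each statement's English description precedes it below -/
import Mathlib

section
/- (Performance Difference Lemma, finite-horizon version) For two policies π and π_b on a finite MDP with horizon H, the difference in expected return satisfies ρ(π) − ρ(π_b) = Σ_{h=0}^{H-1} E_{(s,a) ∼ d_h^π} [ A^{π_b}_h(s,a) ], where d_h^π is the state-action distribution at step h under π and A^{π_b}_h(s,a) = Q^{π_b}_h(s,a) − V^{π_b}_h(s) is the advantage of π_b at step h. -/
open Finset

/-- Finite-horizon value function defined by the number of remaining steps:
`finV P R π n s` is the value at state `s` with `n` steps to go. -/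
noncomputable def finV {S A : Type*} [Fintype S] [Fintype A]
    (P : S → A → S → ℝ) (R : S → A → ℝ) (π : S → A → ℝ) : ℕ → S → ℝ
  | 0 => fun _ => 0
  | (n + 1) => fun s => ∑ a, π s a * (R s a + ∑ s', P s a s' * finV P R π n s')

/-- Step-`h` action-value with `n` steps remaining after taking the action,
i.e. `Q` with `n+1` steps to go. -/
noncomputable def finQ {S A : Type*} [Fintype S] [Fintype A]
    (P : S → A → S → ℝ) (R : S → A → ℝ) (π : S → A → ℝ) (n : ℕ) (s : S) (a : A) : ℝ :=
  R s a + ∑ s', P s a s' * finV P R π n s'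

/-- State distribution at step `h` under policy `π` starting from `μ0`. -/
noncomputable def stateDist {S A : Type*} [Fintype S] [Fintype A]
    (P : S → A → S → ℝ) (π : S → A → ℝ) (μ0 : S → ℝ) : ℕ → S → ℝ
  | 0 => μ0
  | (h + 1) => fun s' => ∑ s, ∑ a, stateDist P π μ0 h s * π s a * P s a s'

/-! Averaging `Q^{π_b}_h - V^{π_b}_h` over the step-`h` state-action distribution of `π` gives
`E_{d_h^π}[R] + E_{d_{h+1}^π}[V^{π_b}_{h+1}] - E_{d_h^π}[V^{π_b}_h]`, so the sum over `h < H`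
telescopes to `∑_h E_{d_h^π}[R] - ρ(π_b)`. Taking `π_b = π`, where every advantage averages to
zero, identifies `∑_h E_{d_h^π}[R]` with `ρ(π)`. -/

section PerformanceDifference

variable {S A : Type*} [Fintype S] [Fintype A] (P : S → A → S → ℝ) (R : S → A → ℝ)

theorem sum_policy_mul_of_sum_eq_one {π : S → A → ℝ} (hπ1 : ∀ s, ∑ a, π s a = 1)
    (d f : S → ℝ) : ∑ s, ∑ a, d s * π s a * f s = ∑ s, d s * f s := by
  simp only [← Finset.sum_mul, ← Finset.mul_sum, hπ1, mul_one]

theorem sum_stateDist_mul_finQ (π p : S → A → ℝ) (μ0 : S → ℝ) (h n : ℕ) :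
    ∑ s, ∑ a, stateDist P π μ0 h s * π s a * finQ P R p n s a =
      ∑ s, ∑ a, stateDist P π μ0 h s * π s a * R s a +
        ∑ s', stateDist P π μ0 (h + 1) s' * finV P R p n s' := by
  simp only [finQ, stateDist, mul_add, Finset.sum_add_distrib, Finset.mul_sum, Finset.sum_mul]
  congr 1
  refine (Finset.sum_congr rfl fun s _ => Finset.sum_comm).trans ?_
  rw [Finset.sum_comm]
  simp only [mul_assoc]

theorem sum_mul_advantage_self {π : S → A → ℝ} (hπ1 : ∀ s, ∑ a, π s a = 1) (d : S → ℝ) (n : ℕ) :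
    ∑ s, ∑ a, d s * π s a * (finQ P R π n s a - finV P R π (n + 1) s) = 0 := by
  simp only [mul_sub, Finset.sum_sub_distrib, sum_policy_mul_of_sum_eq_one hπ1]
  simp only [finV, finQ, mul_assoc, ← Finset.mul_sum, sub_self]

theorem sum_advantage_eq {π : S → A → ℝ} (hπ1 : ∀ s, ∑ a, π s a = 1) (p : S → A → ℝ)
    (μ0 : S → ℝ) (H : ℕ) :
    ∑ h ∈ range H, ∑ s, ∑ a,
        (stateDist P π μ0 h s * π s a) * (finQ P R p (H - h - 1) s a - finV P R p (H - h) s) =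
      ∑ h ∈ range H, ∑ s, ∑ a, stateDist P π μ0 h s * π s a * R s a -
        ∑ s, μ0 s * finV P R p H s := by
  set f : ℕ → ℝ := fun h => ∑ s, stateDist P π μ0 h s * finV P R p (H - h) s with hf
  have step : ∀ h, ∑ s, ∑ a,
      (stateDist P π μ0 h s * π s a) * (finQ P R p (H - h - 1) s a - finV P R p (H - h) s) =
        ∑ s, ∑ a, stateDist P π μ0 h s * π s a * R s a + (f (h + 1) - f h) := by
    intro h
    simp only [mul_sub, Finset.sum_sub_distrib, sum_policy_mul_of_sum_eq_one hπ1,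
      sum_stateDist_mul_finQ, hf, Nat.sub_sub]
    ring
  have f_zero : f 0 = ∑ s, μ0 s * finV P R p H s := rfl
  have f_H : f H = 0 := by simp [hf, finV]
  rw [Finset.sum_congr rfl fun h _ => step h, Finset.sum_add_distrib, Finset.sum_range_sub,
    f_zero, f_H, zero_sub, sub_eq_add_neg]

theorem sum_mul_finV_eq_sum_reward {π : S → A → ℝ} (hπ1 : ∀ s, ∑ a, π s a = 1)
    (μ0 : S → ℝ) (H : ℕ) :
    ∑ s, μ0 s * finV P R π H s =
      ∑ h ∈ range H, ∑ s, ∑ a, stateDist P π μ0 h s * π s a * R s a := by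
  have no_advantage := sum_advantage_eq P R hπ1 π μ0 H
  rw [Finset.sum_eq_zero fun h hh => ?_] at no_advantage
  · linarith
  · obtain ⟨n, hn⟩ := Nat.exists_eq_add_one_of_ne_zero (Nat.sub_ne_zero_of_lt (mem_range.mp hh))
    rw [hn, Nat.add_sub_cancel]
    exact sum_mul_advantage_self P R hπ1 _ _

end PerformanceDifference

theorem performance_difference_finite_horizon_general {S A : Type*} [Fintype S] [Fintype A]
    (P : S → A → S → ℝ) (R : S → A → ℝ) (μ0 : S → ℝ)
    (π πb : S → A → ℝ) (H : ℕ)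
    (hπ1 : ∀ s, ∑ a, π s a = 1) :
    (∑ s, μ0 s * finV P R π H s) - (∑ s, μ0 s * finV P R πb H s) =
      ∑ h ∈ range H, ∑ s, ∑ a,
        (stateDist P π μ0 h s * π s a) *
          (finQ P R πb (H - h - 1) s a - finV P R πb (H - h) s) := by
  rw [sum_advantage_eq P R hπ1, sum_mul_finV_eq_sum_reward P R hπ1]

/-- Performance-difference lemma (finite horizon `H`):
`ρ(π) − ρ(π_b) = ∑_{h<H} E_{(s,a)∼d_h^π}[Q^{π_b}_h(s,a) − V^{π_b}_h(s)]`,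
where step-`h` values of the behavior policy are the values with `H−h` steps to go. -/
theorem performance_difference_finite_horizon {S A : Type*} [Fintype S] [Fintype A]
    (P : S → A → S → ℝ) (R : S → A → ℝ) (μ0 : S → ℝ)
    (π πb : S → A → ℝ) (H : ℕ)
    (hP0 : ∀ s a s', 0 ≤ P s a s') (hP1 : ∀ s a, ∑ s', P s a s' = 1)
    (hπ0 : ∀ s a, 0 ≤ π s a) (hπ1 : ∀ s, ∑ a, π s a = 1)
    (hπb0 : ∀ s a, 0 ≤ πb s a) (hπb1 : ∀ s, ∑ a, πb s a = 1)
    (hμ0 : ∀ s, 0 ≤ μ0 s) (hμ1 : ∑ s, μ0 s = 1) :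
    (∑ s, μ0 s * finV P R π H s) - (∑ s, μ0 s * finV P R πb H s) =
      ∑ h ∈ range H, ∑ s, ∑ a,
        (stateDist P π μ0 h s * π s a) *
          (finQ P R πb (H - h - 1) s a - finV P R πb (H - h) s) :=
  performance_difference_finite_horizon_general P R μ0 π πb H hπ1
end

section
/- (McDiarmid / bounded differences inequality) Let X_1,…,X_n be independent random variables with X_i ∈ 𝒳_i, and let f : 𝒳_1 × ⋯ × 𝒳_n → ℝ satisfy the bounded differences property with constants c_1,…,c_n: changing the i-th coordinate changes f by at most c_i. Then for all ε > 0, P(f(X) − E[f(X)] ≥ ε) ≤ exp(−2ε² / Σ_i c_i²). -/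
/-!
Chernoff's method applied to `f(X) - 𝔼 f(X)`; by independence, `X` may be replaced by the
identity on the product of the laws of the `Xᵢ`. Splitting off the first coordinate `z`,
`f - 𝔼 f = (f - 𝔼_z f) + (𝔼_z f - 𝔼 f)`. For fixed values of the other coordinates the first
summand is centred and takes values in an interval of length `c₀`, so by Hoeffding's lemma it is
sub-Gaussian with variance proxy `c₀² / 4`. The second summand is the centred version of a
function of the remaining coordinates that again has bounded differences, so by induction it is
sub-Gaussian with proxy `∑_{i ≠ 0} cᵢ² / 4`. Integrating out `z` first shows that the proxies
add, and the Chernoff bound `exp (-ε² / (2 σ²))` with `σ² = ∑ cᵢ² / 4` is the claim.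
-/

open MeasureTheory ProbabilityTheory Real
open scoped NNReal

universe u

theorem exists_forall_mem_Icc_of_sub_le {α : Type*} {g : α → ℝ} {c : ℝ}
    (h : ∀ x y, g x - g y ≤ c) : ∃ a, ∀ x, g x ∈ Set.Icc a (a + c) := by
  rcases isEmpty_or_nonempty α with hα | hα
  · exact ⟨0, isEmptyElim⟩
  · have ⟨x₀⟩ := hα
    have hbdd : BddBelow (Set.range g) := ⟨g x₀ - c, by rintro _ ⟨x, rfl⟩; linarith [h x₀ x]⟩
    refine ⟨⨅ x, g x, fun x => ⟨ciInf_le hbdd x, ?_⟩⟩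
    have : g x - c ≤ ⨅ y, g y := le_ciInf fun y => by linarith [h x y]
    linarith

namespace ProbabilityTheory.HasSubgaussianMGF

variable {α β : Type*} {mα : MeasurableSpace α} {mβ : MeasurableSpace β}
  {μ : Measure α} {ν : Measure β}

theorem prod_add [SFinite μ] [SFinite ν] {U : β → ℝ} {V : α × β → ℝ} {cU cV : ℝ≥0}
    (hU : HasSubgaussianMGF U cU ν) (hVm : AEStronglyMeasurable V (μ.prod ν))
    (hV : ∀ y, HasSubgaussianMGF (fun x => V (x, y)) cV μ) :
    HasSubgaussianMGF (fun p => V p + U p.2) (cV + cU) (μ.prod ν) := by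
  have hsection_le (t : ℝ) (y : β) :
      ∫ x, exp (t * (V (x, y) + U y)) ∂μ ≤ exp (cV * t ^ 2 / 2) * exp (t * U y) := by
    simp_rw [mul_add, exp_add, integral_mul_const]
    gcongr
    exact (hV y).mgf_le t
  have hint (t : ℝ) : Integrable (fun p => exp (t * (V p + U p.2))) (μ.prod ν) := by
    have hm : AEStronglyMeasurable (fun p => exp (t * (V p + U p.2))) (μ.prod ν) :=
      continuous_exp.comp_aestronglyMeasurable
        ((hVm.add hU.aestronglyMeasurable.comp_snd).const_mul t)
    refine (integrable_prod_iff' hm).2 ⟨ae_of_all _ fun y => ?_, ?_⟩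
    · simp_rw [mul_add, exp_add]
      exact ((hV y).integrable_exp_mul t).mul_const _
    · refine ((hU.integrable_exp_mul t).const_mul (exp (cV * t ^ 2 / 2))).mono'
        hm.norm.prod_swap.integral_prod_right' (ae_of_all _ fun y => ?_)
      simp_rw [norm_of_nonneg (exp_nonneg _)]
      rw [norm_of_nonneg (integral_nonneg fun _ => exp_nonneg _)]
      exact hsection_le t y
  refine ⟨hint, fun t => ?_⟩
  calc mgf (fun p => V p + U p.2) (μ.prod ν) t
      = ∫ y, ∫ x, exp (t * (V (x, y) + U y)) ∂μ ∂ν := integral_prod_symm _ (hint t)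
    _ ≤ ∫ y, exp (cV * t ^ 2 / 2) * exp (t * U y) ∂ν :=
      integral_mono_of_nonneg (ae_of_all _ fun y => integral_nonneg fun x => exp_nonneg _)
        ((hU.integrable_exp_mul t).const_mul _) (ae_of_all _ (hsection_le t))
    _ = exp (cV * t ^ 2 / 2) * mgf U ν t := integral_const_mul _ _
    _ ≤ exp (cV * t ^ 2 / 2) * exp (cU * t ^ 2 / 2) := by gcongr; exact hU.mgf_le t
    _ = exp (↑(cV + cU) * t ^ 2 / 2) := by rw [← exp_add]; push_cast; ring_nf

end ProbabilityTheory.HasSubgaussianMGF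

def BoundedDifferences {ι : Type*} [DecidableEq ι] {𝒳 : ι → Type*}
    (f : (∀ i, 𝒳 i) → ℝ) (c : ι → ℝ) : Prop :=
  ∀ i x (x' : 𝒳 i), |f x - f (Function.update x i x')| ≤ c i

namespace BoundedDifferences

variable {ι : Type*} [DecidableEq ι] {𝒳 : ι → Type*} {f : (∀ i, 𝒳 i) → ℝ} {c : ι → ℝ}

theorem abs_sub_le_sum [Fintype ι] (hf : BoundedDifferences f c) (x y : ∀ i, 𝒳 i) :
    |f x - f y| ≤ ∑ i, c i := by
  suffices ∀ s : Finset ι, ∀ x y : ∀ i, 𝒳 i, (∀ i ∉ s, x i = y i) →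
      |f x - f y| ≤ ∑ i ∈ s, c i from this .univ x y (by simp)
  intro s
  induction s using Finset.induction_on with
  | empty =>
    intro x y hxy
    simp [funext fun i => hxy i (Finset.notMem_empty i)]
  | @insert i s hi ih =>
    intro x y hxy
    have hy : ∀ j ∉ s, x j = Function.update y i (x i) j := by
      intro j hj
      rcases eq_or_ne j i with rfl | hji
      · simp
      · simpa [hji] using hxy j (by simp [hji, hj])
    calc |f x - f y|
        ≤ |f x - f (Function.update y i (x i))| + |f (Function.update y i (x i)) - f y| :=
          abs_sub_le ..
      _ ≤ ∑ j ∈ s, c j + c i := add_le_add (ih x _ hy) (abs_sub_comm (f y) _ ▸ hf i y (x i))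
      _ = ∑ j ∈ insert i s, c j := by rw [Finset.sum_insert hi, add_comm]

theorem exists_abs_le [Fintype ι] (hf : BoundedDifferences f c) : ∃ C, ∀ x, |f x| ≤ C := by
  rcases isEmpty_or_nonempty (∀ i, 𝒳 i) with h | ⟨⟨x₀⟩⟩
  · exact ⟨0, fun x => isEmptyElim x⟩
  · refine ⟨|f x₀| + ∑ i, c i, fun x => ?_⟩
    linarith [abs_sub_abs_le_abs_sub (f x) (f x₀), hf.abs_sub_le_sum x x₀]

section insertNth

variable {n : ℕ} {𝒳 : Fin (n + 1) → Type*} {f : (∀ i, 𝒳 i) → ℝ} {c : Fin (n + 1) → ℝ}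

theorem sub_insertNth_le (hf : BoundedDifferences f c) (p : Fin (n + 1)) (z z' : 𝒳 p)
    (y : ∀ j, 𝒳 (p.succAbove j)) : f (p.insertNth z y) - f (p.insertNth z' y) ≤ c p := by
  have := hf p (p.insertNth z' y) z
  rw [Fin.update_insertNth, abs_sub_comm] at this
  exact (abs_le.1 this).2

theorem integral_insertNth [∀ i, MeasurableSpace (𝒳 i)] (hf : BoundedDifferences f c)
    (hfm : Measurable f) (p : Fin (n + 1)) (μ : Measure (𝒳 p)) [IsProbabilityMeasure μ] :
    BoundedDifferences (fun y => ∫ z, f (p.insertNth z y) ∂μ) (fun j => c (p.succAbove j)) := by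
  obtain ⟨C, hC⟩ := hf.exists_abs_le
  have hint (y : ∀ j, 𝒳 (p.succAbove j)) : Integrable (fun z => f (p.insertNth z y)) μ :=
    .of_bound (hfm.comp ((MeasurableEquiv.piFinSuccAbove 𝒳 p).symm.measurable.comp
      measurable_prodMk_right)).aestronglyMeasurable C (ae_of_all _ fun z => hC _)
  intro j y x'
  rw [← integral_sub (hint y) (hint _)]
  refine (norm_integral_le_of_norm_le_const (G := ℝ) (μ := μ) (C := c (p.succAbove j))
    (ae_of_all _ fun z => ?_)).trans_eq (by rw [probReal_univ, mul_one])
  simpa [Fin.insertNth_update] using hf (p.succAbove j) (p.insertNth z y) x'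

end insertNth

theorem hasSubgaussianMGF_sub_integral_pi {n : ℕ} {𝒳 : Fin n → Type u}
    [∀ i, MeasurableSpace (𝒳 i)] {f : (∀ i, 𝒳 i) → ℝ} {c : Fin n → ℝ}
    (hf : BoundedDifferences f c) (hfm : Measurable f)
    (μ : ∀ i, Measure (𝒳 i)) [∀ i, IsProbabilityMeasure (μ i)] :
    HasSubgaussianMGF (fun x => f x - ∫ y, f y ∂Measure.pi μ) (∑ i, (‖c i‖₊ / 2) ^ 2)
      (Measure.pi μ) := by
  induction n with
  | zero =>
    have hconst (x : ∀ i, 𝒳 i) : f x - ∫ y, f y ∂Measure.pi μ = 0 := by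
      rw [integral_eq_const (ae_of_all _ fun y => congrArg f (Subsingleton.elim y x)), sub_self]
    simp [hconst]
  | succ n ih =>
    have he := measurePreserving_piFinSuccAbove μ 0
    set e := MeasurableEquiv.piFinSuccAbove 𝒳 0
    set ν := Measure.pi fun j => μ (Fin.succAbove 0 j)
    set F := fun y => ∫ z, f (Fin.insertNth 0 z y) ∂μ 0
    have hfm_insertNth : Measurable fun q : 𝒳 0 × (∀ j, 𝒳 (Fin.succAbove 0 j)) =>
        f (Fin.insertNth 0 q.1 q.2) :=
      hfm.comp e.symm.measurable
    have hFm : Measurable F := hfm_insertNth.stronglyMeasurable.integral_prod_left'.measurable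
    obtain ⟨C, hC⟩ := hf.exists_abs_le
    have hM : ∫ x, f x ∂Measure.pi μ = ∫ y, F y ∂ν := by
      rw [← he.symm.integral_comp' (g := f)]
      exact integral_prod_symm _
        (.of_bound hfm_insertNth.aestronglyMeasurable C (ae_of_all _ fun _ => hC _))
    have hU := ih (hf.integral_insertNth hfm 0 (μ 0)) hFm (fun j => μ (Fin.succAbove 0 j))
    have hV (y : ∀ j, 𝒳 (Fin.succAbove 0 j)) :
        HasSubgaussianMGF (fun z => f (Fin.insertNth 0 z y) - F y) ((‖c 0‖₊ / 2) ^ 2) (μ 0) := by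
      obtain ⟨a, ha⟩ := exists_forall_mem_Icc_of_sub_le fun z z' => hf.sub_insertNth_le 0 z z' y
      have := hasSubgaussianMGF_of_mem_Icc
        (hfm_insertNth.comp measurable_prodMk_right).aemeasurable (ae_of_all (μ 0) ha)
      rwa [add_sub_cancel_left] at this
    have hsplit :=
      hU.prod_add (hfm_insertNth.sub (hFm.comp measurable_snd)).aestronglyMeasurable hV
    convert (he.map_eq ▸ hsplit).of_map he.measurable.aemeasurable using 1
    · ext x
      have hx : Fin.insertNth 0 (e x).1 (e x).2 = x := e.symm_apply_apply x
      simp only [Pi.sub_apply, Function.comp_apply, hx, hM, F, ν]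
      ring
    · rw [Fin.sum_univ_succAbove _ 0]

end BoundedDifferences

/-- McDiarmid's bounded-differences inequality: if `f` has the bounded
differences property with constants `c i` and `X i` are independent, then
`P(f(X) − E[f(X)] ≥ ε) ≤ exp(−2ε²/∑ c i²)`. -/
theorem mcdiarmid_inequality {Ω : Type*} [MeasureSpace Ω]
    [IsProbabilityMeasure (ℙ : Measure Ω)]
    {n : ℕ} {𝒳 : Fin n → Type*} [∀ i, MeasurableSpace (𝒳 i)]
    (X : ∀ i, Ω → 𝒳 i) (hXmeas : ∀ i, Measurable (X i))
    (hindep : iIndepFun X ℙ)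
    (f : (∀ i, 𝒳 i) → ℝ) (hfmeas : Measurable f)
    (c : Fin n → ℝ)
    (hbd : ∀ (i : Fin n) (x : ∀ j, 𝒳 j) (x' : 𝒳 i),
      |f x - f (Function.update x i x')| ≤ c i)
    (ε : ℝ) (hε : 0 < ε) :
    (ℙ {ω | f (fun i => X i ω) - (∫ ω', f (fun i => X i ω') ∂ℙ) ≥ ε}).toReal ≤
      Real.exp (-2 * ε ^ 2 / ∑ i, (c i) ^ 2) := by
  have hXm : Measurable fun ω i => X i ω := measurable_pi_lambda _ hXmeas
  have _ (i : Fin n) := Measure.isProbabilityMeasure_map (μ := ℙ) (hXmeas i).aemeasurable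
  have hlaw := hindep.map_fun_eq_pi_map fun i => (hXmeas i).aemeasurable
  have hW := (hlaw ▸ BoundedDifferences.hasSubgaussianMGF_sub_integral_pi hbd hfmeas
    fun i => (ℙ : Measure Ω).map (X i)).of_map hXm.aemeasurable
  rw [integral_map hXm.aemeasurable hfmeas.aestronglyMeasurable] at hW
  calc (ℙ {ω | f (fun i => X i ω) - (∫ ω', f (fun i => X i ω') ∂ℙ) ≥ ε}).toReal
      ≤ exp (-ε ^ 2 / (2 * ((∑ i, (‖c i‖₊ / 2) ^ 2 : ℝ≥0) : ℝ))) := hW.measure_ge_le hε.le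
    _ = exp (-2 * ε ^ 2 / ∑ i, c i ^ 2) := by
      push_cast
      simp only [norm_eq_abs, div_pow, sq_abs, ← Finset.sum_div]
      ring_nf
end
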